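/- For every H ∈ [1/2, 1) and every x ∈ [0,1], one has R_H(x) ≥ x²(1−x²)(1−H)((2H−1)(1−x) + 2), where R_H(x) = 1 − 2Hx − (1−x)^{2H}(1−x²) + 2Hx^{2H+1} − x^{2+2H}. -/

import Mathlib

/-!
Put `b = 2H - 1 ∈ [0, 1]`. Each fractional power in `R_H` is replaced by a polynomial bound in
the direction the sign of its term requires: `(1-x)^{2H} = (1-x)(1-x)^b` is bounded above by the
second-order Bernoulli inequality `t^b ≤ 1 - b(1-t) - b(1-b)(1-t)²/2` (`t ∈ [0,1]`),
`x^{2+2H} = x³ x^b` above by Bernoulli's inequality `t^p ≤ 1 - p(1-t)`, and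
`x^{2H+1} = x³ x^{-(1-b)}` below by its reciprocal form `t^{-p} ≥ 1 + p(1-t)`.
The resulting polynomial lower bound for `R_H` exceeds the claimed one by
`b (1-b) x³ (1-x) ≥ 0`.
-/

/-- The function `R_H` of formula (21). -/
noncomputable def RH (H x : ℝ) : ℝ :=
  1 - 2*H*x - (1-x) ^ (2*H) * (1 - x^2) + 2*H*x ^ (2*H+1) - x ^ (2+2*H)

open Real Set

section RpowBounds

variable {p t : ℝ}

theorem rpow_le_one_sub_mul_one_sub (hp0 : 0 ≤ p) (hp1 : p ≤ 1) (ht : 0 ≤ t) :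
    t ^ p ≤ 1 - p * (1 - t) := by
  have h := rpow_one_add_le_one_add_mul_self (s := t - 1) (by linarith) hp0 hp1
  rw [add_sub_cancel] at h
  linarith

theorem one_add_mul_one_sub_le_rpow_neg (hp0 : 0 ≤ p) (hp1 : p ≤ 1) (ht : 0 < t) :
    1 + p * (1 - t) ≤ t ^ (-p) := by
  have hpos : 0 < t ^ p := rpow_pos_of_pos ht p
  rw [rpow_neg ht.le, ← one_div, le_div_iff₀ hpos]
  have hle := rpow_le_one_sub_mul_one_sub hp0 hp1 ht.le
  rcases le_or_gt 0 (1 + p * (1 - t)) with h | h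
  · -- `(1 + u) t^p ≤ (1 + u)(1 - u) ≤ 1` with `u = p (1 - t)`
    nlinarith [mul_le_mul_of_nonneg_left hle h, sq_nonneg (p * (1 - t))]
  · nlinarith

theorem rpow_le_one_sub_mul_one_sub_sub_sq (hp0 : 0 ≤ p) (hp1 : p ≤ 1) (ht0 : 0 ≤ t)
    (ht1 : t ≤ 1) : t ^ p ≤ 1 - p * (1 - t) - p * (1 - p) / 2 * (1 - t) ^ 2 := by
  set g : ℝ → ℝ := fun y => 1 - p * (1 - y) - p * (1 - p) / 2 * (1 - y) ^ 2 - y ^ p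
  have hg' : ∀ y, 0 < y → HasDerivAt g (p * (1 + (1 - p) * (1 - y) - y ^ (-(1 - p)))) y := by
    intro y hy
    have hsub : HasDerivAt (fun y : ℝ => 1 - y) (-1) y := (hasDerivAt_id y).const_sub 1
    have hpow : HasDerivAt (fun y : ℝ => y ^ p) (p * y ^ (p - 1)) y :=
      hasDerivAt_rpow_const (Or.inl hy.ne')
    refine ((((hsub.const_mul p).const_sub 1).sub
      ((hsub.pow 2).const_mul (p * (1 - p) / 2))).sub hpow).congr_deriv ?_
    rw [neg_sub]
    push_cast
    ring
  have hg_cont : Continuous g := by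
    have := continuous_rpow_const hp0
    fun_prop
  have hg_anti : AntitoneOn g (Icc t 1) := by
    refine antitoneOn_of_deriv_nonpos (convex_Icc t 1) hg_cont.continuousOn ?_ ?_ <;>
      rw [interior_Icc] <;> intro y hy
    · exact (hg' y (ht0.trans_lt hy.1)).differentiableAt.differentiableWithinAt
    · rw [(hg' y (ht0.trans_lt hy.1)).deriv]
      have hrecip := one_add_mul_one_sub_le_rpow_neg (p := 1 - p) (by linarith) (by linarith)
        (ht0.trans_lt hy.1)
      exact mul_nonpos_of_nonneg_of_nonpos hp0 (by linarith)
  have h := hg_anti ⟨le_rfl, ht1⟩ ⟨ht1, le_rfl⟩ ht1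
  simp only [g, sub_self, mul_zero, sub_zero, ne_eq, OfNat.ofNat_ne_zero, not_false_eq_true,
    zero_pow, one_rpow] at h
  linarith

theorem rpow_add_one_le (hp0 : 0 ≤ p) (hp1 : p ≤ 1) (ht0 : 0 ≤ t) (ht1 : t ≤ 1) :
    t ^ (p + 1) ≤ t * (1 - p * (1 - t) - p * (1 - p) / 2 * (1 - t) ^ 2) := by
  rw [rpow_add_one' ht0 (by linarith), mul_comm]
  exact mul_le_mul_of_nonneg_left (rpow_le_one_sub_mul_one_sub_sub_sq hp0 hp1 ht0 ht1) ht0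

theorem rpow_natCast_add_le (n : ℕ) (hp0 : 0 ≤ p) (hp1 : p ≤ 1) (ht : 0 ≤ t) :
    t ^ ((n : ℝ) + p) ≤ t ^ n * (1 - p * (1 - t)) := by
  rw [rpow_add_of_nonneg ht n.cast_nonneg hp0, rpow_natCast]
  exact mul_le_mul_of_nonneg_left (rpow_le_one_sub_mul_one_sub hp0 hp1 ht) (by positivity)

theorem pow_mul_one_add_le_rpow_natCast_sub {n : ℕ} (hn : n ≠ 0) (hp0 : 0 ≤ p) (hp1 : p ≤ 1)
    (ht : 0 ≤ t) : t ^ n * (1 + p * (1 - t)) ≤ t ^ ((n : ℝ) - p) := by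
  rcases ht.eq_or_lt with rfl | ht
  · rw [zero_pow hn, zero_mul]
    exact rpow_nonneg le_rfl _
  rw [sub_eq_add_neg (n : ℝ), rpow_add ht, rpow_natCast]
  exact mul_le_mul_of_nonneg_left (one_add_mul_one_sub_le_rpow_neg hp0 hp1 ht) (by positivity)

end RpowBounds

/-- inequality (23): for `H ∈ [1/2, 1)` and `x ∈ [0,1]`,
`R_H(x) ≥ x²(1−x²)(1−H)((2H−1)(1−x) + 2)`. -/
theorem statement7 (H x : ℝ) (hH : H ∈ Set.Ico (1/2 : ℝ) 1) (hx : x ∈ Set.Icc (0:ℝ) 1) :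
    x^2 * (1 - x^2) * (1 - H) * ((2*H - 1)*(1 - x) + 2) ≤ RH H x := by
  obtain ⟨hH0, hH1⟩ := hH
  obtain ⟨hx0, hx1⟩ := hx
  have hA := rpow_add_one_le (p := 2*H - 1) (t := 1 - x) (by linarith) (by linarith)
    (by linarith) (by linarith)
  have hB := pow_mul_one_add_le_rpow_natCast_sub (n := 3) (p := 2 - 2*H) (t := x) three_ne_zero
    (by linarith) (by linarith) hx0
  have hC := rpow_natCast_add_le 3 (p := 2*H - 1) (t := x) (by linarith) (by linarith) hx0
  rw [sub_add_cancel, sub_sub_cancel] at hA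
  rw [show ((3 : ℕ) : ℝ) - (2 - 2*H) = 2*H + 1 by push_cast; ring] at hB
  rw [show ((3 : ℕ) : ℝ) + (2*H - 1) = 2 + 2*H by push_cast; ring] at hC
  have hslack : 0 ≤ (2*H - 1) * (2 - 2*H) * x^3 * (1 - x) := by
    have : 0 ≤ (2*H - 1) * (2 - 2*H) := mul_nonneg (by linarith) (by linarith)
    have : 0 ≤ 1 - x := by linarith
    positivity
  have h1x2 : 0 ≤ 1 - x^2 := by nlinarith
  unfold RH
  linear_combination (1 - x^2) * hA + 2*H * hB + hC + hslack
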